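/- arXiv:2406.05937 — 2 statements merged into one kernel-verified Lean document; each statement's English description precedes it below -/
import Mathlib

section
/- Consider the two-node linear Gaussian construction: Model 1 has graph 1→2 with Z₂ = Z₁ + N₂, identity mixing G = I₂, noise variances V₁*, V₂ in environment 1 (node 1 intervened with variance V₁*) and V₁, V₂* in environment 2 (node 2 intervened). Model 2 has the empty graph, mixing matrix Ḡ = [[a,b],[c,1]], and variances V̄₁, V̄₁*, V̄₂, V̄₂*. If V̄₁V̄₂ ≠ V̄₁*V̄₂*, then there exist real numbers a, b, c and positive variances V₁, V₁*, V₂, V₂* such that the observed covariance matrices match in both environments: Cov(X¹) = Cov(X̄¹) and Cov(X²) = Cov(X̄²). Consequently, two stochastic hard interventions on the strongly separating set {{1},{2}} do not suffice for identifiability with n = 2 latent nodes. -/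
open Matrix

/-- Two-node counterexample. Given positive `V̄₁, V̄₁*, V̄₂, V̄₂*` with
`V̄₁V̄₂ ≠ V̄₁*V̄₂*`, there exist `a, b, c` and positive variances `V₁, V₁*, V₂, V₂*` such that
the observed covariance matrices of Model 1 (graph 1→2, identity mixing) and Model 2
(empty graph, mixing `[[a,b],[c,1]]`) coincide in both interventional environments. Hence two
stochastic hard interventions on the strongly separating set `{{1},{2}}` do not suffice for
identifiability with `n = 2`. -/
theorem stmt10 (V1b V1sb V2b V2sb : ℝ)
    (h1 : 0 < V1b) (h1s : 0 < V1sb) (h2 : 0 < V2b) (h2s : 0 < V2sb)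
    (hne : V1b * V2b ≠ V1sb * V2sb) :
    ∃ a b c V1 V1s V2 V2s : ℝ,
      0 < V1 ∧ 0 < V1s ∧ 0 < V2 ∧ 0 < V2s ∧
      (!![V1s, V1s; V1s, V1s + V2] =
        !![a ^ 2 * V1sb + b ^ 2 * V2b, a * c * V1sb + b * V2b;
           a * c * V1sb + b * V2b, c ^ 2 * V1sb + V2b]) ∧
      (!![V1, 0; 0, V2s] =
        !![a ^ 2 * V1b + b ^ 2 * V2sb, a * c * V1b + b * V2sb;
           a * c * V1b + b * V2sb, c ^ 2 * V1b + V2sb]) := by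
  obtain ⟨D, hD⟩ : ∃ D : ℝ, D = V1sb * V2sb - V1b * V2b := ⟨_, rfl⟩
  have hDne : D ≠ 0 := hD ▸ sub_ne_zero.mpr hne.symm
  have hD2 : 0 < D ^ 2 := by positivity
  obtain ⟨c, hcpos, hc2⟩ : ∃ c : ℝ, 0 < c ∧ c ^ 2 = V1sb * V2sb ^ 2 * V2b / (2 * D ^ 2) :=
    ⟨Real.sqrt (V1sb * V2sb ^ 2 * V2b / (2 * D ^ 2)),
      Real.sqrt_pos.mpr (by positivity), Real.sq_sqrt (by positivity)⟩
  obtain ⟨denom, hdenomdef⟩ : ∃ d : ℝ, d = V1sb * V2sb ^ 2 + c ^ 2 * V1b ^ 2 * V2b := ⟨_, rfl⟩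
  have hdenom : 0 < denom := by rw [hdenomdef]; positivity
  obtain ⟨a, ha⟩ : ∃ a : ℝ, a = c * D * V2sb / denom := ⟨_, rfl⟩
  obtain ⟨b, hb⟩ : ∃ b : ℝ, b = -(a * c * V1b / V2sb) := ⟨_, rfl⟩
  have hane : a ≠ 0 := by
    rw [ha]
    apply div_ne_zero _ hdenom.ne'
    exact mul_ne_zero (mul_ne_zero hcpos.ne' hDne) h2s.ne'
  obtain ⟨V1s, hV1s⟩ : ∃ x : ℝ, x = a * c * V1sb + b * V2b := ⟨_, rfl⟩
  obtain ⟨V2, hV2⟩ : ∃ x : ℝ, x = c ^ 2 * V1sb + V2b - V1s := ⟨_, rfl⟩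
  obtain ⟨V1, hV1⟩ : ∃ x : ℝ, x = a ^ 2 * V1b + b ^ 2 * V2sb := ⟨_, rfl⟩
  obtain ⟨V2s, hV2s⟩ : ∃ x : ℝ, x = c ^ 2 * V1b + V2sb := ⟨_, rfl⟩
  have hV1s' : V1s = c ^ 2 * D ^ 2 / denom := by
    rw [hV1s, hb, ha, hD, hdenomdef]
    field_simp
    ring
  have hV1spos : 0 < V1s := by rw [hV1s']; positivity
  have hc2D2 : c ^ 2 * D ^ 2 = V1sb * V2sb ^ 2 * V2b / 2 := by
    rw [hc2]; field_simp
  have hV1sle : V1s ≤ V2b / 2 := by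
    rw [hV1s', div_le_iff₀ hdenom, hc2D2, hdenomdef]
    nlinarith [mul_nonneg (mul_nonneg (sq_nonneg c) (sq_nonneg V1b)) h2.le]
  have hV2pos : 0 < V2 := by
    rw [hV2]; nlinarith [hV1sle, mul_nonneg (sq_nonneg c) h1s.le]
  have hV1pos : 0 < V1 := by
    have h : 0 < a ^ 2 := by positivity
    rw [hV1]; nlinarith [sq_nonneg b]
  have hV2spos : 0 < V2s := by rw [hV2s]; positivity
  have hE1 : V1s = a ^ 2 * V1sb + b ^ 2 * V2b := by
    rw [hV1s, hb, ha, hD, hdenomdef]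
    field_simp
    ring
  have hE5 : (0 : ℝ) = a * c * V1b + b * V2sb := by
    rw [hb]; field_simp; ring
  refine ⟨a, b, c, V1, V1s, V2, V2s, hV1pos, hV1spos, hV2pos, hV2spos, ?_, ?_⟩
  · ext i j
    fin_cases i <;> fin_cases j <;>
      simp [← hE1, ← hV1s, hV2]
  · ext i j
    fin_cases i <;> fin_cases j <;>
      simp [hV1, hV2s, ← hE5]
end

section
/- If U = g(Y) + c₀·N where Y and N are independent random vectors/variables, g is a measurable function, c₀ ≠ 0, and U is independent of Y, then g(Y) is almost surely constant. -/
open MeasureTheory ProbabilityTheory Filter Set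
open scoped ENNReal

/-- A monotone `ℝ≥0∞`-valued function on `ℝ` with limits `0` at `-∞` and `1` at `+∞`
cannot satisfy `G (q - a) = G (q - b)` for all rationals `q` with `a < b`. -/
lemma aux_no_period (G : ℝ → ℝ≥0∞) (hmono : Monotone G)
    (htop : Tendsto G atTop (nhds 1))
    (hbot : Tendsto G atBot (nhds 0))
    (a b : ℝ) (hab : a < b) (h : ∀ q : ℚ, G (q - a) = G (q - b)) : False := by
  obtain ⟨r, hr0, hrd⟩ := exists_rat_btwn (sub_pos.mpr hab)
  have h2 : ∀ q : ℚ, G (q - b) = G ((q + r : ℚ) - b) := by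
    intro q
    apply le_antisymm
    · exact hmono (by push_cast; linarith)
    · calc G (((q + r : ℚ) : ℝ) - b) ≤ G ((q : ℝ) - a) := hmono (by push_cast; linarith)
        _ = G ((q : ℝ) - b) := h q
  have h3 : ∀ n : ℕ, G (((0:ℚ) : ℝ) - b) = G (((n * r : ℚ) : ℝ) - b) := by
    intro n
    induction n with
    | zero => norm_num
    | succ n ih =>
      have e : (((n+1 : ℕ) : ℚ)) * r = (n : ℚ) * r + r := by push_cast; ring
      rw [e]
      exact ih.trans (h2 ((n : ℚ) * r))
  have h4 : ∀ n : ℕ, G (((-(n * r) : ℚ) : ℝ) - b) = G (((0:ℚ) : ℝ) - b) := by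
    intro n
    induction n with
    | zero => norm_num
    | succ n ih =>
      have e : (-(((n:ℕ) : ℚ) * r) : ℚ) = -(((n+1:ℕ):ℚ) * r) + r := by push_cast; ring
      calc G (((-(((n+1:ℕ):ℚ) * r) : ℚ) : ℝ) - b)
          = G (((-(((n+1:ℕ):ℚ) * r) + r : ℚ) : ℝ) - b) := h2 _
        _ = G (((-((n:ℚ) * r) : ℚ) : ℝ) - b) := by rw [← e]
        _ = G (((0:ℚ) : ℝ) - b) := ih
  have hmul : Tendsto (fun n : ℕ => (n : ℝ) * (r : ℝ)) atTop atTop :=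
    Tendsto.atTop_mul_const hr0 tendsto_natCast_atTop_atTop
  have hseq_top : Tendsto (fun n : ℕ => (((n * r : ℚ) : ℝ)) - b) atTop atTop := by
    apply tendsto_atTop_add_const_right
    have e : (fun n : ℕ => ((n * r : ℚ) : ℝ)) = fun n : ℕ => (n : ℝ) * (r : ℝ) := by
      funext n; push_cast; ring
    rw [e]; exact hmul
  have hseq_bot : Tendsto (fun n : ℕ => (((-(n * r) : ℚ) : ℝ)) - b) atTop atBot := by
    apply tendsto_atBot_add_const_right
    have e : (fun n : ℕ => ((-(n * r) : ℚ) : ℝ)) = fun n : ℕ => -((n : ℝ) * (r : ℝ)) := by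
      funext n; push_cast; ring
    rw [e]; exact tendsto_neg_atTop_atBot.comp hmul
  have hlim1 : Tendsto (fun n : ℕ => G (((n * r : ℚ) : ℝ) - b)) atTop (nhds 1) :=
    htop.comp hseq_top
  have hlim0 : Tendsto (fun n : ℕ => G (((-(n * r) : ℚ) : ℝ) - b)) atTop (nhds 0) :=
    hbot.comp hseq_bot
  have e1 : (fun n : ℕ => G (((n * r : ℚ) : ℝ) - b)) = fun _ => G (((0:ℚ):ℝ) - b) :=
    funext fun n => (h3 n).symm
  have e0 : (fun n : ℕ => G (((-(n * r) : ℚ) : ℝ) - b)) = fun _ => G (((0:ℚ):ℝ) - b) :=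
    funext fun n => h4 n
  rw [e1] at hlim1
  rw [e0] at hlim0
  have v1 : G (((0:ℚ):ℝ) - b) = 1 := tendsto_nhds_unique tendsto_const_nhds hlim1
  have v0 : G (((0:ℚ):ℝ) - b) = 0 := tendsto_nhds_unique tendsto_const_nhds hlim0
  rw [v1] at v0
  exact one_ne_zero v0

/-- If `U = g(Y) + c₀·N` with `N ⫫ Y`, `c₀ ≠ 0`, and `U ⫫ Y`, then `g(Y)` is
almost surely constant. -/
theorem stmt13 {Ω β : Type*} [MeasurableSpace Ω] [MeasurableSpace β]
    (μ : Measure Ω) [IsProbabilityMeasure μ]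
    (Y : Ω → β) (N : Ω → ℝ) (g : β → ℝ) (c0 : ℝ) (hc0 : c0 ≠ 0)
    (hY : Measurable Y) (hN : Measurable N) (hg : Measurable g)
    (hNY : IndepFun N Y μ)
    (hUY : IndepFun (fun ω => g (Y ω) + c0 * N ω) Y μ) :
    ∃ k : ℝ, (fun ω => g (Y ω)) =ᵐ[μ] (fun _ => k) := by
  classical
  have hνp : IsProbabilityMeasure (μ.map Y) := Measure.isProbabilityMeasure_map hY.aemeasurable
  have hηp : IsProbabilityMeasure (μ.map N) := Measure.isProbabilityMeasure_map hN.aemeasurable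
  set ν := μ.map Y with hνdef
  set ρ := (μ.map N).map (fun n => c0 * n) with hρdef
  have hρp : IsProbabilityMeasure ρ :=
    Measure.isProbabilityMeasure_map (measurable_const_mul c0).aemeasurable
  set G : ℝ → ℝ≥0∞ := fun t => ρ (Iic t) with hGdef
  have hGof : G = fun t => ENNReal.ofReal (cdf ρ t) := by
    funext t; rw [hGdef]; exact (ofReal_cdf (μ := ρ) t).symm
  have hGmono : Monotone G := fun s t hst => measure_mono (Iic_subset_Iic.mpr hst)
  have hGtop : Tendsto G atTop (nhds 1) := by
    rw [hGof]
    simpa using ENNReal.tendsto_ofReal (tendsto_cdf_atTop ρ)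
  have hGbot : Tendsto G atBot (nhds 0) := by
    rw [hGof]
    simpa using ENNReal.tendsto_ofReal (tendsto_cdf_atBot ρ)
  -- joint law of (Y, N) is product
  have hmap : μ.map (fun ω => (Y ω, N ω)) = ν.prod (μ.map N) :=
    (indepFun_iff_map_prod_eq_prod_map_map hY.aemeasurable hN.aemeasurable).mp hNY.symm
  -- key computation
  have hkey : ∀ (q : ℝ) (B : Set β), MeasurableSet B →
      μ ({ω | g (Y ω) + c0 * N ω ≤ q} ∩ Y ⁻¹' B) = ∫⁻ y in B, G (q - g y) ∂ν := by
    intro q B hB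
    set s : Set (β × ℝ) := {p : β × ℝ | g p.1 + c0 * p.2 ≤ q} ∩ Prod.fst ⁻¹' B with hsdef
    have hs : MeasurableSet s :=
      (measurableSet_le ((hg.comp measurable_fst).add (measurable_snd.const_mul c0))
        measurable_const).inter (measurable_fst hB)
    have hpre : {ω | g (Y ω) + c0 * N ω ≤ q} ∩ Y ⁻¹' B = (fun ω => (Y ω, N ω)) ⁻¹' s := by
      ext ω; simp [hsdef]
    rw [hpre, ← Measure.map_apply (hY.prodMk hN) hs, hmap, Measure.prod_apply hs]
    have hinner : ∀ y, (μ.map N) (Prod.mk y ⁻¹' s) = B.indicator (fun y => G (q - g y)) y := by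
      intro y
      by_cases hy : y ∈ B
      · rw [Set.indicator_of_mem hy]
        have e : Prod.mk y ⁻¹' s = (fun n => c0 * n) ⁻¹' Iic (q - g y) := by
          ext n
          simp only [hsdef, Set.mem_preimage, Set.mem_inter_iff, Set.mem_setOf_eq, mem_Iic, hy,
            and_true]
          constructor <;> intro <;> linarith
        rw [e, ← Measure.map_apply (measurable_const_mul c0) measurableSet_Iic]
      · rw [Set.indicator_of_notMem hy]
        have e : Prod.mk y ⁻¹' s = ∅ := by
          ext n; simp [hsdef, hy]
        simp [e]
    simp_rw [hinner]
    rw [lintegral_indicator hB]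
  have hmeasG : ∀ q : ℝ, Measurable fun y => G (q - g y) :=
    fun q => hGmono.measurable.comp (measurable_const.sub hg)
  -- for each q, G (q - g y) is a.e. constant
  have hq : ∀ q : ℝ,
      (fun y => G (q - g y)) =ᵐ[ν] fun _ => μ {ω | g (Y ω) + c0 * N ω ≤ q} := by
    intro q
    refine ae_eq_of_forall_setLIntegral_eq_of_sigmaFinite₀ (hmeasG q).aemeasurable
      aemeasurable_const (fun B hB _ => ?_)
    rw [← hkey q B hB, setLIntegral_const]
    have hU : μ ((fun ω => g (Y ω) + c0 * N ω) ⁻¹' Iic q ∩ Y ⁻¹' B)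
        = μ ((fun ω => g (Y ω) + c0 * N ω) ⁻¹' Iic q) * μ (Y ⁻¹' B) :=
      hUY.measure_inter_preimage_eq_mul _ _ measurableSet_Iic hB
    have hpre2 : (fun ω => g (Y ω) + c0 * N ω) ⁻¹' Iic q = {ω | g (Y ω) + c0 * N ω ≤ q} := rfl
    rw [hpre2] at hU
    rw [hU, hνdef, Measure.map_apply hY hB]
  have hae : ∀ᵐ y ∂ν, ∀ q : ℚ, G ((q : ℝ) - g y) = μ {ω | g (Y ω) + c0 * N ω ≤ (q : ℝ)} := by
    rw [ae_all_iff]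
    exact fun q => hq (q : ℝ)
  obtain ⟨y₀, hy₀⟩ := hae.exists
  have hν_ae : ∀ᵐ y ∂ν, g y = g y₀ := by
    filter_upwards [hae] with y hy
    by_contra hne
    rcases lt_trichotomy (g y) (g y₀) with hlt | heq | hgt
    · exact aux_no_period G hGmono hGtop hGbot _ _ hlt
        (fun q => ((hy q).trans ((hy₀ q).symm)))
    · exact hne heq
    · exact aux_no_period G hGmono hGtop hGbot _ _ hgt
        (fun q => ((hy₀ q).trans ((hy q).symm)))
  refine ⟨g y₀, ?_⟩
  have hmeas : MeasurableSet {y : β | g y = g y₀} := hg (measurableSet_singleton _)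
  exact (ae_map_iff hY.aemeasurable hmeas).mp hν_ae
end
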